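/- Let n ≥ 1 and let Φ : Matrix (Fin n) (Fin n) ℂ → Matrix (Fin n) (Fin n) ℂ be a quantum channel (linear, trace-preserving, completely positive). Then there exist a natural number m with 1 ≤ m ≤ n² and a unitary matrix U ∈ Matrix ((Fin n) × (Fin m)) ((Fin n) × (Fin m)) ℂ such that for every ρ ∈ Matrix (Fin n) (Fin n) ℂ, Φ(ρ) = Tr_B[U · (ρ ⊗ |0⟩⟨0|_B) · U†]. -/

import Mathlib

/-!
Complete positivity makes the Choi matrix `∑ᵢⱼ Eᵢⱼ ⊗ Φ(Eᵢⱼ)` positive semidefinite, so it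
factors as `Bᴴ B`; the `n²` rows of `B`, reshaped into `n × n` matrices, are Kraus operators
with `Φ ρ = ∑ₖ Kₖ ρ Kₖᴴ`, and trace preservation gives `∑ₖ Kₖᴴ Kₖ = 1`. Stacking the `Kₖ` yields
an isometry `V : ℂⁿ → ℂⁿ ⊗ ℂ^(n²)`; completing its columns to an orthonormal basis gives a
unitary `U` with `U (ρ ⊗ |0⟩⟨0|) Uᴴ = V ρ Vᴴ`, and the partial trace of `V ρ Vᴴ` is the Kraus sum.
-/

open Matrix Kronecker ComplexOrder

/-- Partial trace over the second factor `B`. -/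
noncomputable def ptraceB {A B : Type*} [Fintype B] (M : Matrix (A × B) (A × B) ℂ) :
    Matrix A A ℂ :=
  Matrix.of fun a a' => ∑ b : B, M (a, b) (a', b)

/-- The ancilla state `|0⟩⟨0|` on `Fin m`. -/
def ket0bra0 (m : ℕ) : Matrix (Fin m) (Fin m) ℂ :=
  Matrix.of fun i j => if i.val = 0 ∧ j.val = 0 then 1 else 0

namespace Matrix

section Choi

variable {A : Type*} [Fintype A] [DecidableEq A]

def choiMatrix (Φ : Matrix A A ℂ →ₗ[ℂ] Matrix A A ℂ) : Matrix (A × A) (A × A) ℂ :=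
  of fun p q => Φ (single p.1 q.1 1) p.2 q.2

theorem posSemidef_choiMatrix (Φ : Matrix A A ℂ →ₗ[ℂ] Matrix A A ℂ)
    (hΦ : ∀ X : Matrix (A × A) (A × A) ℂ, X.PosSemidef →
      (of fun p q : A × A => Φ (of fun a a' => X (p.1, a) (q.1, a')) p.2 q.2).PosSemidef) :
    (choiMatrix Φ).PosSemidef := by
  -- the unnormalised maximally entangled vector: the blocks of `|Ω⟩⟨Ω|` are the matrix units
  let Ω : A × A → ℂ := fun p => if p.1 = p.2 then 1 else 0
  have hblock : ∀ c c' : A,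
      (of fun a a' => vecMulVec Ω (star Ω) (c, a) (c', a')) = single c c' 1 := by
    intro c c'
    ext a a'
    by_cases h : c = a <;> by_cases h' : c' = a' <;> simp [Ω, vecMulVec_apply, single, h, h']
  convert hΦ _ (posSemidef_vecMulVec_self_star Ω) using 1
  ext p q
  simp [choiMatrix, hblock]

open scoped MatrixOrder in
theorem exists_kraus_of_posSemidef_choiMatrix {Φ : Matrix A A ℂ →ₗ[ℂ] Matrix A A ℂ}
    (hΦ : (choiMatrix Φ).PosSemidef) :
    ∃ K : A × A → Matrix A A ℂ, ∀ ρ, Φ ρ = ∑ k, K k * ρ * (K k)ᴴ := by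
  obtain ⟨B, hB⟩ := CStarAlgebra.nonneg_iff_eq_star_mul_self.mp hΦ.nonneg
  let K k : Matrix A A ℂ := (of fun i a => B k (i, a))ᴴ
  suffices Φ = ∑ k, LinearMap.mulLeft ℂ (K k) ∘ₗ LinearMap.mulRight ℂ (K k)ᴴ from
    ⟨K, fun ρ => by simp [this, Matrix.mul_assoc]⟩
  refine ext_linearMap ℂ fun i j => LinearMap.ext_ring ?_
  ext a a'
  have hentry := congrFun (congrFun hB (i, a)) (j, a')
  simp only [choiMatrix, of_apply, star_eq_conjTranspose, mul_apply, conjTranspose_apply]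
    at hentry
  simp only [LinearMap.comp_apply, singleLinearMap_apply, hentry]
  simp [K, sum_apply, mul_apply, single, ite_and]

end Choi

variable {A B ι : Type*} [Fintype A] [Fintype B] [Fintype ι]

theorem sum_conjTranspose_mul_eq_one_of_trace {R : Type*} [CommSemiring R] [StarRing R]
    [DecidableEq A] (K : ι → Matrix A A R)
    (h : ∀ ρ, (∑ k, K k * ρ * (K k)ᴴ).trace = ρ.trace) :
    ∑ k, (K k)ᴴ * K k = 1 :=
  ext_iff_trace_mul_right.mpr fun ρ => by
    simpa only [Finset.sum_mul, trace_sum, trace_mul_cycle _ ρ, Matrix.one_mul] using h ρ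

def stack {R A' : Type*} (K : B → Matrix A A' R) : Matrix (A × B) A' R :=
  of fun p c => K p.2 p.1 c

theorem conjTranspose_stack_mul_stack {R A' : Type*} [Semiring R] [StarRing R]
    (K : B → Matrix A A' R) :
    (stack K)ᴴ * stack K = ∑ b, (K b)ᴴ * K b := by
  ext c c'
  simp [stack, mul_apply, sum_apply, Fintype.sum_prod_type, Finset.sum_comm (γ := A)]

theorem mul_kronecker_single_mul_conjTranspose {R : Type*} [CommSemiring R] [StarRing R]
    [DecidableEq B] (U : Matrix (A × B) (A × B) R) (ρ : Matrix A A R) (b₀ : B) :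
    U * (ρ ⊗ₖ single b₀ b₀ 1) * Uᴴ =
      U.submatrix id (·, b₀) * ρ * (U.submatrix id (·, b₀))ᴴ := by
  ext p q
  simp [mul_apply, kroneckerMap_apply, single, Fintype.sum_prod_type, Finset.sum_mul, ite_and]

theorem exists_mem_unitaryGroup_submatrix_eq {𝕜 : Type*} [RCLike 𝕜] [DecidableEq A]
    [DecidableEq B] (V : Matrix (A × B) A 𝕜) (hV : Vᴴ * V = 1) (b₀ : B) :
    ∃ U ∈ unitaryGroup (A × B) 𝕜, U.submatrix id (·, b₀) = V := by
  let col : A × B → EuclideanSpace 𝕜 (A × B) := fun q => WithLp.toLp 2 fun p => V p q.1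
  have hcol : Orthonormal 𝕜 ({q : A × B | q.2 = b₀}.domRestrict col) := by
    rw [orthonormal_iff_ite]
    rintro ⟨⟨c, d⟩, hd : d = b₀⟩ ⟨⟨c', d'⟩, hd' : d' = b₀⟩
    have hVcc' := congrFun (congrFun hV c) c'
    simp only [mul_apply, conjTranspose_apply, one_apply] at hVcc'
    simp only [Set.domRestrict_apply, col, EuclideanSpace.inner_toLp_toLp, dotProduct,
      Subtype.ext_iff, Prod.ext_iff, hd, hd', and_true, ← hVcc']
    exact Finset.sum_congr rfl fun _ _ => mul_comm _ _
  obtain ⟨b, hb⟩ := hcol.exists_orthonormalBasis_extension_of_card_eq finrank_euclideanSpace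
  refine ⟨(EuclideanSpace.basisFun _ 𝕜).toBasis.toMatrix b,
    (EuclideanSpace.basisFun _ 𝕜).toMatrix_orthonormalBasis_mem_unitary b, ?_⟩
  ext p c
  rw [submatrix_apply, Module.Basis.toMatrix_apply, hb (c, b₀) rfl]
  rfl

end Matrix

theorem ptraceB_stack_mul_mul_conjTranspose {A B : Type*} [Fintype A] [Fintype B]
    (K : B → Matrix A A ℂ) (ρ : Matrix A A ℂ) :
    ptraceB (stack K * ρ * (stack K)ᴴ) = ∑ b, K b * ρ * (K b)ᴴ := by
  ext a a'
  simp [ptraceB, stack, mul_apply, Matrix.sum_apply]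

theorem ket0bra0_eq_single {m : ℕ} (hm : 0 < m) : ket0bra0 m = single ⟨0, hm⟩ ⟨0, hm⟩ 1 := by
  ext i j
  simp [ket0bra0, single, Fin.ext_iff, eq_comm]

/-- **Stinespring dilation theorem**: any linear, trace-preserving, completely positive map
on `n × n` complex matrices (`n ≥ 1`) arises as `ρ ↦ Tr_B[U (ρ ⊗ |0⟩⟨0|) U†]` for some unitary
`U` on an extended system with ancilla dimension `m`, `1 ≤ m ≤ n²`. -/
theorem stinespring_dilation (n : ℕ) (hn : 1 ≤ n)
    (Φ : Matrix (Fin n) (Fin n) ℂ →ₗ[ℂ] Matrix (Fin n) (Fin n) ℂ)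
    (htp : ∀ ρ : Matrix (Fin n) (Fin n) ℂ, (Φ ρ).trace = ρ.trace)
    (hcp : ∀ (C : Type) [Fintype C], ∀ X : Matrix (C × Fin n) (C × Fin n) ℂ, X.PosSemidef →
      (Matrix.of fun p q : C × Fin n =>
        Φ (Matrix.of fun a a' => X (p.1, a) (q.1, a')) p.2 q.2).PosSemidef) :
    ∃ m : ℕ, 1 ≤ m ∧ m ≤ n ^ 2 ∧
      ∃ U : Matrix (Fin n × Fin m) (Fin n × Fin m) ℂ,
        Uᴴ * U = 1 ∧ U * Uᴴ = 1 ∧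
        ∀ ρ : Matrix (Fin n) (Fin n) ℂ,
          Φ ρ = ptraceB (U * (ρ ⊗ₖ ket0bra0 m) * Uᴴ) := by
  obtain ⟨K₀, hK₀⟩ := exists_kraus_of_posSemidef_choiMatrix (posSemidef_choiMatrix Φ (hcp _))
  let e : Fin n × Fin n ≃ Fin (n ^ 2) := finProdFinEquiv.trans (finCongr (sq n).symm)
  let K : Fin (n ^ 2) → Matrix (Fin n) (Fin n) ℂ := fun b => K₀ (e.symm b)
  have hK : ∀ ρ, Φ ρ = ∑ b, K b * ρ * (K b)ᴴ := fun ρ => by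
    rw [hK₀, ← e.symm.sum_comp]
  have hKsum : ∑ b, (K b)ᴴ * K b = 1 :=
    sum_conjTranspose_mul_eq_one_of_trace K fun ρ => by rw [← hK, htp]
  have hm : 0 < n ^ 2 := pow_pos hn 2
  obtain ⟨U, hU, hUV⟩ := exists_mem_unitaryGroup_submatrix_eq (stack K)
    (by rw [conjTranspose_stack_mul_stack, hKsum]) ⟨0, hm⟩
  refine ⟨n ^ 2, hm, le_rfl, U, Unitary.star_mul_self_of_mem hU,
    Unitary.mul_star_self_of_mem hU, fun ρ => ?_⟩
  rw [ket0bra0_eq_single hm, mul_kronecker_single_mul_conjTranspose, hUV,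
    ptraceB_stack_mul_mul_conjTranspose, hK]
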